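/- arXiv:2111.12461 — 5 statements merged into one kernel-verified Lean document; each statement's English description precedes it below -/
import Mathlib

section
/- Let α ∈ ℂ and t ∈ (0, 2π). Then e^{it} · (1 − e^{−it})^α = (2 sin(t/2))^α · exp(i·(απ/2 + t(1 − α/2))), where (1 − e^{−it})^α and (2 sin(t/2))^α are principal-branch complex powers (the base 2 sin(t/2) being a positive real number regarded as a complex number). Consequently the boundary of the stable region of the complex-order system is parametrized by λ(t) = 2^α (sin(t/2))^α e^{i[απ/2 + t(1−α/2)]} + 1. -/
open Real Complex

/-- The boundary curve `β_α(t) = e^{it} (1 - e^{-it})^α` (principal branch). -/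
noncomputable def betaCurve (α : ℂ) (t : ℝ) : ℂ :=
  Complex.exp (Complex.I * t) * (1 - Complex.exp (-(Complex.I * t))) ^ α

/-- For `t ∈ (0, 2π)`:
`e^{it}(1 - e^{-it})^α = (2 sin(t/2))^α exp(i(απ/2 + t(1 - α/2)))`, and consequently the
boundary of the stable region is `λ(t) = 2^α (sin(t/2))^α e^{i[απ/2 + t(1-α/2)]} + 1`. -/
theorem betaCurve_eq (α : ℂ) (t : ℝ) (ht : t ∈ Set.Ioo 0 (2 * Real.pi)) :
    betaCurve α t
        = ((2 * Real.sin (t / 2) : ℝ) : ℂ) ^ α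
          * Complex.exp (Complex.I * (α * Real.pi / 2 + (t : ℂ) * (1 - α / 2)))
    ∧ betaCurve α t + 1
        = (2 : ℂ) ^ α * ((Real.sin (t / 2) : ℝ) : ℂ) ^ α
          * Complex.exp (Complex.I * (α * Real.pi / 2 + (t : ℂ) * (1 - α / 2))) + 1 := by
  obtain ⟨ht0, ht2⟩ := ht
  have hsin : 0 < Real.sin (t / 2) :=
    Real.sin_pos_of_pos_of_lt_pi (by linarith) (by linarith)
  set r : ℝ := 2 * Real.sin (t / 2) with hr
  have hrpos : 0 < r := by positivity
  set L : ℝ := Real.log r with hL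
  set θ : ℝ := Real.pi / 2 - t / 2 with hθ
  -- the base written as an explicit exponential
  have hct : Real.cos t = Real.cos (t / 2) ^ 2 - Real.sin (t / 2) ^ 2 := by
    have := Real.cos_two_mul' (t / 2)
    rwa [show 2 * (t / 2) = t by ring] at this
  have hst : Real.sin t = 2 * Real.sin (t / 2) * Real.cos (t / 2) := by
    have := Real.sin_two_mul (t / 2)
    rwa [show 2 * (t / 2) = t by ring] at this
  have hpyth := Real.sin_sq_add_cos_sq (t / 2)
  have hw : (1 : ℂ) - Complex.exp (-(Complex.I * t))
      = Complex.exp (((L : ℝ) : ℂ) + ((θ : ℝ) : ℂ) * Complex.I) := by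
    have e1 : Complex.exp (-(Complex.I * (t : ℂ)))
        = ((Real.cos t : ℝ) : ℂ) - ((Real.sin t : ℝ) : ℂ) * Complex.I := by
      rw [show -(Complex.I * (t : ℂ)) = ((-t : ℝ) : ℂ) * Complex.I by push_cast; ring,
        Complex.exp_mul_I, ← Complex.ofReal_cos, ← Complex.ofReal_sin,
        Real.cos_neg, Real.sin_neg]
      push_cast; ring
    have e2 : Complex.exp (((θ : ℝ) : ℂ) * Complex.I)
        = ((Real.sin (t / 2) : ℝ) : ℂ) + ((Real.cos (t / 2) : ℝ) : ℂ) * Complex.I := by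
      rw [Complex.exp_mul_I, ← Complex.ofReal_cos, ← Complex.ofReal_sin, hθ,
        Real.cos_pi_div_two_sub, Real.sin_pi_div_two_sub]
    rw [Complex.exp_add, ← Complex.ofReal_exp, Real.exp_log hrpos, e1, e2, hr]
    push_cast [hct, hst]
    linear_combination -Complex.sin_sq_add_cos_sq ((t : ℂ) / 2)
  have hlog : Complex.log (1 - Complex.exp (-(Complex.I * t)))
      = ((L : ℝ) : ℂ) + ((θ : ℝ) : ℂ) * Complex.I := by
    rw [hw, Complex.log_exp]
    · simp [hθ]; linarith [Real.pi_pos]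
    · simp [hθ]; linarith
  have hne : (1 : ℂ) - Complex.exp (-(Complex.I * t)) ≠ 0 := by
    rw [hw]; exact Complex.exp_ne_zero _
  have key : betaCurve α t
      = ((r : ℝ) : ℂ) ^ α
        * Complex.exp (Complex.I * (α * Real.pi / 2 + (t : ℂ) * (1 - α / 2))) := by
    rw [betaCurve, Complex.cpow_def_of_ne_zero hne, hlog,
      Complex.cpow_def_of_ne_zero (by exact_mod_cast hrpos.ne' : ((r : ℝ) : ℂ) ≠ 0),
      ← Complex.ofReal_log hrpos.le, ← hL, ← Complex.exp_add, ← Complex.exp_add]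
    congr 1
    push_cast [hθ]
    ring
  refine ⟨key, ?_⟩
  rw [key, hr, Complex.ofReal_mul,
    mul_cpow_ofReal_nonneg (by norm_num) hsin.le]
  norm_num
end

section
/- Let α = u + iv with u, v ∈ ℝ, and let t ∈ (0, 2π). Then the modulus of β_α(t) = e^{it}(1 − e^{−it})^α equals (2 sin(t/2))^u · e^{v(t−π)/2}. -/
/-!
For `0 < t < 2π` we have `1 - e^{-it} = 2 sin(t/2) · e^{i(π - t)/2}` with `2 sin(t/2) > 0` and
`(π - t)/2 ∈ (-π/2, π/2)`, so this is the polar form of `1 - e^{-it}` with its principal argument.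
Hence `|(1 - e^{-it})^{u+iv}| = (2 sin(t/2))^u · e^{-v(π - t)/2}`, and `|e^{it}| = 1`.
-/

open Real Complex

theorem Complex.norm_ofReal_mul_exp_mul_I_cpow {r θ : ℝ} (hr : 0 < r)
    (hθ : θ ∈ Set.Ioc (-π) π) (w : ℂ) :
    ‖((r : ℂ) * exp (θ * I)) ^ w‖ = r ^ w.re / Real.exp (θ * w.im) := by
  have hne : (r : ℂ) * exp (θ * I) ≠ 0 := mul_ne_zero (ofReal_ne_zero.2 hr.ne') (exp_ne_zero _)
  rw [norm_cpow_of_ne_zero hne, norm_mul, norm_exp_ofReal_mul_I, norm_real, norm_of_nonneg hr.le,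
    mul_one, exp_mul_I, arg_mul_cos_add_sin_mul_I hr hθ]

theorem Complex.one_sub_exp_neg_I_mul (t : ℝ) :
    1 - exp (-(I * t)) = ((2 * Real.sin (t / 2) : ℝ) : ℂ) * exp (((π - t) / 2 : ℝ) * I) := by
  set w := exp (-(t / 2) * I) with hw_def
  have hrot : exp ((π - t) / 2 * I) = I * w := by
    rw [show ((π : ℂ) - t) / 2 * I = π / 2 * I + -(t / 2) * I by ring, exp_add, exp_pi_div_two_mul_I]
  have hsq : exp (-(I * t)) = w ^ 2 := by
    rw [← exp_nat_mul]; ring_nf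
  have hinv : exp (t / 2 * I) = w⁻¹ := by
    rw [← exp_neg]; ring_nf
  push_cast
  rw [hrot, hsq, Complex.sin, hinv, ← hw_def]
  have hw : w ≠ 0 := exp_ne_zero _
  field_simp
  linear_combination (1 - w ^ 2) * I_sq

/-- For `α = u + iv` and `t ∈ (0, 2π)`, the modulus of `β_α(t)` is
`(2 sin(t/2))^u e^{v(t-π)/2}`. -/
theorem abs_betaCurve (u v t : ℝ) (ht : t ∈ Set.Ioo 0 (2 * Real.pi)) :
    ‖betaCurve (u + v * Complex.I) t‖
      = (2 * Real.sin (t / 2)) ^ u * Real.exp (v * (t - Real.pi) / 2) := by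
  obtain ⟨ht0, ht2⟩ := ht
  have hr : 0 < 2 * Real.sin (t / 2) := by
    have := Real.sin_pos_of_pos_of_lt_pi (x := t / 2) (by linarith) (by linarith)
    linarith
  have hθ : (π - t) / 2 ∈ Set.Ioc (-π) π := ⟨by linarith, by linarith⟩
  rw [betaCurve, one_sub_exp_neg_I_mul, norm_mul, norm_ofReal_mul_exp_mul_I_cpow hr hθ,
    mul_comm I, norm_exp_ofReal_mul_I, one_mul, div_eq_mul_inv, ← Real.exp_neg,
    show (u + v * I : ℂ).re = u by simp, show (u + v * I : ℂ).im = v by simp]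
  congr 2
  ring
end

section
/- Let α = u + iv with u ∈ (0,1) and v > 0, and let t₁, t₂ ∈ (0, 2π). Then β_α(t₁) = β_α(t₂) if and only if both of the following hold: (i) u·log(2 sin(t₁/2)) + v·t₁/2 = u·log(2 sin(t₂/2)) + v·t₂/2, and (ii) there exists k ∈ ℤ such that v·log(2 sin(t₁/2)) + t₁(1 − u/2) = v·log(2 sin(t₂/2)) + t₂(1 − u/2) + 2kπ. -/
open Real Complex

lemma base_eq_exp (t : ℝ) (ht : t ∈ Set.Ioo 0 (2 * Real.pi)) :
    (1 : ℂ) - Complex.exp (-(Complex.I * t))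
      = Complex.exp (↑(Real.log (2 * Real.sin (t / 2))) + ↑((Real.pi - t) / 2) * Complex.I) := by
  obtain ⟨ht0, ht2⟩ := ht
  have hs : 0 < Real.sin (t / 2) :=
    Real.sin_pos_of_pos_of_lt_pi (by linarith) (by linarith)
  have h2s : (0:ℝ) < 2 * Real.sin (t / 2) := by linarith
  rw [Complex.exp_add, ← Complex.ofReal_exp, Real.exp_log h2s]
  set A := Complex.exp (↑(-(t/2)) * Complex.I) with hA
  set B := Complex.exp ((↑(t/2) : ℂ) * Complex.I) with hB
  have hmul : ∀ a b : ℝ, Complex.exp (↑a * Complex.I) * Complex.exp (↑b * Complex.I)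
      = Complex.exp (↑(a + b) * Complex.I) := by
    intro a b; rw [← Complex.exp_add]; push_cast; ring_nf
  have hI2 : Complex.I * Complex.I = -1 := Complex.I_mul_I
  have hIexp : Complex.I = Complex.exp (↑(Real.pi/2) * Complex.I) := by
    rw [Complex.exp_mul_I]; push_cast; simp
  have hIpi : Complex.exp (↑((Real.pi - t) / 2) * Complex.I) = Complex.I * A := by
    rw [hA, show ((Real.pi - t)/2 : ℝ) = Real.pi/2 + (-(t/2)) by ring, ← hmul, ← hIexp]
  have hsin : ((Real.sin (t/2) : ℝ) : ℂ) = (A - B) * Complex.I / 2 := by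
    rw [Complex.ofReal_sin, Complex.sin, hA, hB]
    push_cast
    ring_nf
  have hAt : A * A = Complex.exp (-(Complex.I * t)) := by
    rw [hA, hmul]
    push_cast
    ring_nf
  have hAB : A * B = 1 := by
    rw [hA, hB, hmul]; norm_num
  rw [hIpi, Complex.ofReal_mul, hsin, Complex.ofReal_ofNat]
  linear_combination (A * B - A * A) * hI2 + hAt - hAB

lemma log_base (t : ℝ) (ht : t ∈ Set.Ioo 0 (2 * Real.pi)) :
    Complex.log ((1 : ℂ) - Complex.exp (-(Complex.I * t)))
      = ↑(Real.log (2 * Real.sin (t / 2))) + ↑((Real.pi - t) / 2) * Complex.I := by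
  rw [base_eq_exp t ht, Complex.log_exp]
  · simp only [Complex.add_im, Complex.ofReal_im, Complex.mul_im, Complex.I_im, Complex.I_re,
      Complex.ofReal_re, mul_zero, zero_add, mul_one]
    have := Real.pi_pos
    obtain ⟨ht0, ht2⟩ := ht
    linarith
  · simp only [Complex.add_im, Complex.ofReal_im, Complex.mul_im, Complex.I_im, Complex.I_re,
      Complex.ofReal_re, mul_zero, zero_add, mul_one]
    have := Real.pi_pos
    obtain ⟨ht0, ht2⟩ := ht
    linarith

lemma betaCurve_eq_exp (α : ℂ) (t : ℝ) (ht : t ∈ Set.Ioo 0 (2 * Real.pi)) :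
    betaCurve α t = Complex.exp (Complex.I * t
      + (↑(Real.log (2 * Real.sin (t / 2))) + ↑((Real.pi - t) / 2) * Complex.I) * α) := by
  have hne : (1 : ℂ) - Complex.exp (-(Complex.I * t)) ≠ 0 := by
    rw [base_eq_exp t ht]; exact Complex.exp_ne_zero _
  rw [betaCurve, Complex.cpow_def_of_ne_zero hne, log_base t ht, ← Complex.exp_add]

/-- For `α = u + iv` with `u ∈ (0,1)`, `v > 0`, and `t₁, t₂ ∈ (0, 2π)`,
`β_α(t₁) = β_α(t₂)` iff the moduli match and the arguments match modulo `2π`. -/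
theorem betaCurve_eq_iff (u v : ℝ) (hu : u ∈ Set.Ioo (0 : ℝ) 1) (hv : 0 < v)
    (t₁ t₂ : ℝ) (ht₁ : t₁ ∈ Set.Ioo 0 (2 * Real.pi)) (ht₂ : t₂ ∈ Set.Ioo 0 (2 * Real.pi)) :
    betaCurve (u + v * Complex.I) t₁ = betaCurve (u + v * Complex.I) t₂
      ↔ (u * Real.log (2 * Real.sin (t₁ / 2)) + v * t₁ / 2
            = u * Real.log (2 * Real.sin (t₂ / 2)) + v * t₂ / 2
          ∧ ∃ k : ℤ, v * Real.log (2 * Real.sin (t₁ / 2)) + t₁ * (1 - u / 2)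
              = v * Real.log (2 * Real.sin (t₂ / 2)) + t₂ * (1 - u / 2) + 2 * k * Real.pi) := by
  rw [betaCurve_eq_exp _ _ ht₁, betaCurve_eq_exp _ _ ht₂,
    Complex.exp_eq_exp_iff_exists_int]
  set L₁ := Real.log (2 * Real.sin (t₁ / 2))
  set L₂ := Real.log (2 * Real.sin (t₂ / 2))
  constructor
  · rintro ⟨n, h⟩
    rw [Complex.ext_iff] at h
    obtain ⟨hre, him⟩ := h
    simp only [Complex.add_re, Complex.add_im, Complex.mul_re, Complex.mul_im,
      Complex.I_re, Complex.I_im, Complex.ofReal_re, Complex.ofReal_im,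
      Complex.intCast_re, Complex.intCast_im, Complex.ofReal_mul] at hre him
    norm_num at hre him
    constructor
    · linarith
    · exact ⟨n, by push_cast at him ⊢; linarith⟩
  · rintro ⟨h1, k, h2⟩
    refine ⟨k, ?_⟩
    rw [Complex.ext_iff]
    constructor
    · simp only [Complex.add_re, Complex.mul_re, Complex.mul_im,
        Complex.I_re, Complex.I_im, Complex.ofReal_re, Complex.ofReal_im,
        Complex.intCast_re, Complex.intCast_im]
      norm_num
      linarith
    · simp only [Complex.add_im, Complex.mul_re, Complex.mul_im,
        Complex.I_re, Complex.I_im, Complex.ofReal_re, Complex.ofReal_im,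
        Complex.intCast_re, Complex.intCast_im]
      push_cast
      norm_num
      linarith
end

section
/- Let α = u + iv with u ∈ (0,1) and 0 < v < √(2u − u²). Then the map t ↦ β_α(t) = e^{it}(1 − e^{−it})^α is injective on (0, 2π). -/
open Real Complex

noncomputable def auxF (u v t : ℝ) : ℂ :=
  Complex.I * t + (u + v * Complex.I) *
    (↑(Real.log (2 * Real.sin (t / 2))) + ↑((Real.pi - t) / 2) * Complex.I)

lemma sin_half_pos {t : ℝ} (ht : t ∈ Set.Ioo 0 (2 * Real.pi)) : 0 < Real.sin (t / 2) :=
  Real.sin_pos_of_pos_of_lt_pi (by linarith [ht.1]) (by linarith [ht.2])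

lemma one_sub_exp_eq {t : ℝ} (ht : t ∈ Set.Ioo 0 (2 * Real.pi)) :
    1 - Complex.exp (-(Complex.I * t)) =
      Complex.exp (↑(Real.log (2 * Real.sin (t / 2))) + ↑((Real.pi - t) / 2) * Complex.I) := by
  have hs := sin_half_pos ht
  have hel : Real.exp (Real.log (2 * Real.sin (t / 2))) = 2 * Real.sin (t / 2) :=
    Real.exp_log (by linarith)
  have hcos : Real.cos ((Real.pi - t) / 2) = Real.sin (t / 2) := by
    rw [show (Real.pi - t) / 2 = Real.pi / 2 - t / 2 by ring, Real.cos_pi_div_two_sub]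
  have hsin : Real.sin ((Real.pi - t) / 2) = Real.cos (t / 2) := by
    rw [show (Real.pi - t) / 2 = Real.pi / 2 - t / 2 by ring, Real.sin_pi_div_two_sub]
  have h1 : Real.cos t = 1 - 2 * Real.sin (t / 2) ^ 2 := by
    have hc2 := Real.cos_two_mul (t / 2)
    have hsc := Real.sin_sq_add_cos_sq (t / 2)
    rw [show 2 * (t / 2) = t by ring] at hc2
    linarith
  have h2 : Real.sin t = 2 * Real.sin (t / 2) * Real.cos (t / 2) := by
    have := Real.sin_two_mul (t / 2)
    rw [show 2 * (t / 2) = t by ring] at this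
    exact this
  apply Complex.ext <;>
    simp [Complex.exp_re, Complex.exp_im, Complex.sub_re, Complex.sub_im, hel, hcos, hsin] <;>
    nlinarith [h1, h2]

/-- Forward direction of Theorem 2: for `α = u + iv` with `u ∈ (0,1)` and
`0 < v < √(2u - u²)`, the boundary curve `β_α` is injective on `(0, 2π)`. -/
theorem betaCurve_injOn (u v : ℝ) (hu : u ∈ Set.Ioo (0 : ℝ) 1) (hv : 0 < v)
    (hv' : v < Real.sqrt (2 * u - u ^ 2)) :
    Set.InjOn (betaCurve (u + v * Complex.I)) (Set.Ioo 0 (2 * Real.pi)) := by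
  have hu0 := hu.1
  have hu1 := hu.2
  have hv2 : v ^ 2 < 2 * u - u ^ 2 := (Real.lt_sqrt hv.le).mp hv'
  have hpi := Real.pi_pos
  have key : ∀ r ∈ Set.Ioo 0 (2 * Real.pi),
      betaCurve (u + v * Complex.I) r = Complex.exp (auxF u v r) := by
    intro r hr
    have he := one_sub_exp_eq hr
    have him : ((↑(Real.log (2 * Real.sin (r / 2))) + ↑((Real.pi - r) / 2) * Complex.I) : ℂ).im
        = (Real.pi - r) / 2 := by simp
    have hlog : Complex.log (1 - Complex.exp (-(Complex.I * r))) =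
        ↑(Real.log (2 * Real.sin (r / 2))) + ↑((Real.pi - r) / 2) * Complex.I := by
      rw [he, Complex.log_exp] <;> rw [him]
      · linarith [hr.2]
      · linarith [hr.1]
    have hne : 1 - Complex.exp (-(Complex.I * r)) ≠ 0 := by
      rw [he]; exact Complex.exp_ne_zero _
    rw [betaCurve, Complex.cpow_def_of_ne_zero hne, hlog, ← Complex.exp_add, auxF]
    congr 1
    ring
  intro s hs t ht hst
  rw [key s hs, key t ht] at hst
  obtain ⟨n, hn⟩ := Complex.exp_eq_exp_iff_exists_int.mp hst
  set Ls := Real.log (2 * Real.sin (s / 2)) with hLs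
  set Lt := Real.log (2 * Real.sin (t / 2)) with hLt
  have hre := congrArg Complex.re hn
  have himp := congrArg Complex.im hn
  simp only [auxF, Complex.add_re, Complex.add_im, Complex.mul_re, Complex.mul_im,
    Complex.I_re, Complex.I_im, Complex.ofReal_re, Complex.ofReal_im, Complex.intCast_re,
    Complex.intCast_im, Complex.re_ofNat, Complex.im_ofNat, ← hLs, ← hLt] at hre himp
  -- eliminate the logs:
  have h1 : u * (s - t) - (u ^ 2 + v ^ 2) * (s - t) / 2 = 2 * Real.pi * (n : ℝ) * u := by
    linear_combination u * himp - v * hre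
  have hc : 0 < 2 * u - u ^ 2 - v ^ 2 := by linarith
  have hst' : -(2 * Real.pi) < s - t ∧ s - t < 2 * Real.pi :=
    ⟨by linarith [hs.1, ht.2], by linarith [hs.2, ht.1]⟩
  have hn0 : n = 0 := by
    have hlt : (n : ℝ) < 1 := by
      nlinarith [hst'.1, hst'.2, mul_pos hpi hu0, mul_pos hpi hc,
        mul_nonneg hpi.le (sq_nonneg u), mul_nonneg hpi.le (sq_nonneg v)]
    have hgt : (-1 : ℝ) < (n : ℝ) := by
      nlinarith [hst'.1, hst'.2, mul_pos hpi hu0, mul_pos hpi hc,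
        mul_nonneg hpi.le (sq_nonneg u), mul_nonneg hpi.le (sq_nonneg v)]
    have : (n : ℤ) < 1 := by exact_mod_cast hlt
    have : (-1 : ℤ) < n := by exact_mod_cast hgt
    omega
  rw [hn0] at h1
  simp at h1
  nlinarith [h1]
end

section
/- Let α ∈ ℂ with Re(α) ∈ (0,1), let λ ∈ ℂ, x₀ ∈ ℂ, and let x : ℕ → ℂ be the unique sequence with x(0) = x₀ and x(t+1) = x₀ + (λ − 1) · ∑_{j=0}^{t} φ̃_α(t − j) · x(j) for all t ∈ ℕ. Then there exists R ≥ 1 such that for every z ∈ ℂ with |z| > R, the Z-transform X(z) := ∑_{t=0}^∞ x(t) z^{−t} converges absolutely and satisfies (z(1 − z^{−1})^α − (λ − 1)) · X(z) = z(1 − z^{−1})^{α−1} · x₀. -/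
/-- The sequence `φ̃_α(n) = Γ(n+α)/(Γ(α)Γ(n+1))` from the paper. -/
noncomputable def phiTilde (α : ℂ) (n : ℕ) : ℂ :=
  Complex.Gamma (n + α) / (Complex.Gamma α * Complex.Gamma (n + 1))

/-!
Since `Re α > 0`, `φ̃_α(n) = Γ(n+α)/(Γ(α) n!) = α(α+1)⋯(α+n-1)/n!` is the multichoose coefficient
of `α`, so by the binomial series `∑ φ̃_α(n) w^n = (1 - w)^(-α)` for `|w| < 1`. The recurrence
bounds `x` geometrically, so `X(z)` converges for large `|z|`. Writing `w = z⁻¹` and summing the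
recurrence against `w^(t+1)`, the convolution becomes a product of Z-transforms:
`X = x₀ + w (x₀/(1-w) + (λ-1) X (1-w)^(-α))`. Multiplying by `z (1-w)^α` gives the identity.
-/

open Finset

theorem phiTilde_eq_multichoose {α : ℂ} (hα : ∀ k : ℕ, α ≠ -k) (n : ℕ) :
    phiTilde α n = Ring.multichoose α n := by
  have key := Ring.factorial_nsmul_multichoose_eq_ascPochhammer α n
  rw [Polynomial.ascPochhammer_smeval_eq_eval, ← Complex.Gamma_add_nat_div_Gamma_eq α hα,
    nsmul_eq_mul] at key
  rw [phiTilde, Complex.Gamma_nat_eq_factorial, add_comm, ← div_div, ← key,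
    mul_div_cancel_left₀ _ (Nat.cast_ne_zero.2 n.factorial_ne_zero)]

namespace Complex

theorem one_div_one_sub_cpow_hasFPowerSeriesOnBall_multichoose (α : ℂ) :
    HasFPowerSeriesOnBall (fun w ↦ 1 / (1 - w) ^ α)
      (.ofScalars ℂ (Ring.multichoose α)) 0 1 := by
  rw [show Ring.multichoose α = _ from funext (Ring.multichoose_eq α)]
  exact one_div_one_sub_cpow_hasFPowerSeriesOnBall_zero α

variable (α : ℂ) {w : ℂ}

theorem hasSum_multichoose_mul_pow (hw : ‖w‖ < 1) :
    HasSum (fun n ↦ Ring.multichoose α n * w ^ n) ((1 - w) ^ α)⁻¹ := by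
  simpa [FormalMultilinearSeries.ofScalars_apply_eq, mul_comm] using
    (one_div_one_sub_cpow_hasFPowerSeriesOnBall_multichoose α).hasSum (y := w)
      (by simpa [← ofReal_norm] using hw)

theorem summable_norm_multichoose_mul_pow (hw : ‖w‖ < 1) :
    Summable fun n ↦ ‖Ring.multichoose α n * w ^ n‖ := by
  simpa [FormalMultilinearSeries.ofScalars_apply_eq, mul_comm] using
    (FormalMultilinearSeries.ofScalars ℂ (Ring.multichoose α)).summable_norm_apply (x := w)
      (lt_of_lt_of_le (by simpa [← ofReal_norm] using hw)
        (one_div_one_sub_cpow_hasFPowerSeriesOnBall_multichoose α).r_le)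

theorem exists_norm_multichoose_le : ∃ C > 0, ∀ n, ‖Ring.multichoose α n‖ ≤ C * 2 ^ n := by
  obtain ⟨C, hC0, hC⟩ :=
    (FormalMultilinearSeries.ofScalars ℂ (Ring.multichoose α)).norm_mul_pow_le_of_lt_radius
      (r := 2⁻¹) ((by norm_num : ((2⁻¹ : NNReal) : ENNReal) < 1).trans_le
        (one_div_one_sub_cpow_hasFPowerSeriesOnBall_multichoose α).r_le)
  refine ⟨C, hC0, fun n ↦ ?_⟩
  simpa [FormalMultilinearSeries.ofScalars_norm, ← div_eq_mul_inv, div_le_iff₀] using hC n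

end Complex

theorem le_mul_pow_of_le_add_mul_sum {b : ℕ → ℝ} {c L K : ℝ} (hc : 0 ≤ c) (hL : 0 ≤ L)
    (hK : 0 ≤ K) (h0 : b 0 ≤ c)
    (hsucc : ∀ t, b (t + 1) ≤ c + L * ∑ j ∈ range (t + 1), K ^ (t - j) * b j) (t : ℕ) :
    b t ≤ c * (K + L + 1) ^ t := by
  induction t using Nat.strong_induction_on with
  | _ t ih =>
  cases t with
  | zero => simpa using h0
  | succ t =>
    set M := K + L + 1
    set S := ∑ j ∈ range (t + 1), M ^ j * K ^ (t - j)
    have hS : S * (L + 1) ≤ M ^ (t + 1) := by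
      have := geom_sum₂_mul M K (t + 1)
      simp only [Nat.add_sub_cancel, show M - K = L + 1 by ring] at this
      linarith [pow_nonneg hK (t + 1)]
    have hsum : ∑ j ∈ range (t + 1), K ^ (t - j) * b j ≤ c * S := by
      rw [mul_sum]
      refine sum_le_sum fun j hj ↦ ?_
      calc K ^ (t - j) * b j ≤ K ^ (t - j) * (c * M ^ j) := by
            gcongr; exact ih j (by simpa [Nat.lt_succ_iff] using hj)
        _ = c * (M ^ j * K ^ (t - j)) := by ring
    have hM : L + 1 ≤ M ^ (t + 1) :=
      (by linarith : L + 1 ≤ M).trans (le_self_pow₀ (by linarith) t.succ_ne_zero)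
    calc b (t + 1) ≤ c + L * (c * S) := (hsucc t).trans (by gcongr)
      _ ≤ c * M ^ (t + 1) := by
        nlinarith [mul_le_mul_of_nonneg_left hM hc,
          mul_le_mul_of_nonneg_left hS (mul_nonneg hc hL)]

theorem summable_norm_mul_pow_of_norm_le {R : Type*} [NormedRing R] [NormOneClass R]
    {y : ℕ → R} {c M : ℝ} {w : R} (hM : 0 ≤ M) (hy : ∀ t, ‖y t‖ ≤ c * M ^ t)
    (hw : M * ‖w‖ < 1) : Summable fun t ↦ ‖y t * w ^ t‖ := by
  refine .of_nonneg_of_le (fun _ ↦ norm_nonneg _) (fun t ↦ ?_)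
    ((summable_geometric_of_lt_one (by positivity) hw).mul_left c)
  calc ‖y t * w ^ t‖ ≤ ‖y t‖ * ‖w‖ ^ t :=
        (norm_mul_le _ _).trans (by gcongr; exact norm_pow_le _ _)
    _ ≤ c * M ^ t * ‖w‖ ^ t := by gcongr; exact hy t
    _ = c * (M * ‖w‖) ^ t := by ring

theorem hasSum_sum_range_mul_pow {R : Type*} [NormedCommRing R] [CompleteSpace R] {f g : ℕ → R}
    {w : R} (hf : Summable fun n ↦ ‖f n * w ^ n‖) (hg : Summable fun n ↦ ‖g n * w ^ n‖) :
    HasSum (fun n ↦ (∑ j ∈ range (n + 1), f j * g (n - j)) * w ^ n)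
      ((∑' n, f n * w ^ n) * ∑' n, g n * w ^ n) := by
  have hterm : ∀ n, ∑ j ∈ range (n + 1), f j * w ^ j * (g (n - j) * w ^ (n - j)) =
      (∑ j ∈ range (n + 1), f j * g (n - j)) * w ^ n := fun n ↦ by
    rw [sum_mul]
    refine sum_congr rfl fun j hj ↦ ?_
    rw [← Nat.add_sub_cancel' (Nat.lt_succ_iff.1 (mem_range.1 hj)), pow_add,
      Nat.add_sub_cancel_left]
    ring
  rw [tsum_mul_tsum_eq_tsum_sum_range_of_summable_norm hf hg]
  simp_rw [← hterm]
  exact (summable_norm_sum_mul_range_of_summable_norm hf hg).of_norm.hasSum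

section Recurrence

variable {x k : ℕ → ℂ} {x₀ μ : ℂ}

theorem norm_le_mul_pow_of_recurrence {C K : ℝ} (hK : 0 ≤ K) (hk : ∀ n, ‖k n‖ ≤ C * K ^ n)
    (hx0 : x 0 = x₀) (hrec : ∀ t, x (t + 1) = x₀ + μ * ∑ j ∈ range (t + 1), k (t - j) * x j)
    (t : ℕ) : ‖x t‖ ≤ ‖x₀‖ * (K + ‖μ‖ * C + 1) ^ t := by
  have hC : 0 ≤ C := by simpa using (norm_nonneg _).trans (hk 0)
  refine le_mul_pow_of_le_add_mul_sum (b := fun t ↦ ‖x t‖) (norm_nonneg _) (by positivity) hK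
    (by rw [hx0]) (fun t ↦ ?_) t
  calc ‖x (t + 1)‖ ≤ ‖x₀‖ + ‖μ‖ * ∑ j ∈ range (t + 1), ‖k (t - j)‖ * ‖x j‖ := by
        rw [hrec t]
        refine (norm_add_le _ _).trans ?_
        rw [norm_mul]
        gcongr
        exact (norm_sum_le _ _).trans_eq (by simp_rw [norm_mul])
    _ ≤ ‖x₀‖ + ‖μ‖ * ∑ j ∈ range (t + 1), C * K ^ (t - j) * ‖x j‖ := by
        gcongr with j; exact hk _
    _ = ‖x₀‖ + ‖μ‖ * C * ∑ j ∈ range (t + 1), K ^ (t - j) * ‖x j‖ := by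
        simp_rw [mul_assoc, mul_sum]

theorem tsum_mul_pow_eq_of_recurrence {w : ℂ} (hw : ‖w‖ < 1) (hx0 : x 0 = x₀)
    (hrec : ∀ t, x (t + 1) = x₀ + μ * ∑ j ∈ range (t + 1), k (t - j) * x j)
    (hx : Summable fun t ↦ ‖x t * w ^ t‖) (hk : Summable fun n ↦ ‖k n * w ^ n‖) :
    ∑' t, x t * w ^ t =
      x₀ + w * (x₀ * (1 - w)⁻¹ + μ * ((∑' t, x t * w ^ t) * ∑' n, k n * w ^ n)) := by
  have htail : HasSum (fun t ↦ x (t + 1) * w ^ (t + 1))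
      (w * (x₀ * (1 - w)⁻¹ + μ * ((∑' t, x t * w ^ t) * ∑' n, k n * w ^ n))) := by
    refine ((((hasSum_geometric_of_norm_lt_one hw).mul_left x₀).add
      ((hasSum_sum_range_mul_pow hx hk).mul_left μ)).mul_left w).congr_fun fun t ↦ ?_
    simp_rw [hrec t, mul_comm (k _)]
    ring
  conv_lhs => rw [hx.of_norm.tsum_eq_zero_add, htail.tsum_eq, hx0, pow_zero, mul_one]

end Recurrence

/-- The Z-transform identity underlying Theorem 1 of the paper: for `|z|` large the
Z-transform `X(z)` of the solution converges absolutely and satisfies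
`(z(1-z⁻¹)^α - (λ-1)) X(z) = z(1-z⁻¹)^(α-1) x₀`. -/
theorem ztransform_identity (α lam x₀ : ℂ) (hα : α.re ∈ Set.Ioo (0 : ℝ) 1)
    (x : ℕ → ℂ) (hx0 : x 0 = x₀)
    (hrec : ∀ t : ℕ,
      x (t + 1) = x₀ + (lam - 1) * ∑ j ∈ Finset.range (t + 1), phiTilde α (t - j) * x j) :
    ∃ R : ℝ, 1 ≤ R ∧ ∀ z : ℂ, R < ‖z‖ →
      Summable (fun t : ℕ => ‖x t * (z⁻¹) ^ t‖) ∧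
      (z * (1 - z⁻¹) ^ α - (lam - 1)) * (∑' t : ℕ, x t * (z⁻¹) ^ t)
        = z * (1 - z⁻¹) ^ (α - 1) * x₀ := by
  have hα_ne : ∀ k : ℕ, α ≠ -k := fun k h ↦ by
    linarith [h ▸ hα.1, Complex.neg_re (k : ℂ), Complex.natCast_re k, k.cast_nonneg (α := ℝ)]
  rw [funext (phiTilde_eq_multichoose hα_ne)] at hrec
  obtain ⟨C, hC0, hC⟩ := Complex.exists_norm_multichoose_le α
  have hgrowth := norm_le_mul_pow_of_recurrence zero_le_two hC hx0 hrec
  set M := 2 + ‖lam - 1‖ * C + 1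
  have hM : 1 ≤ M := by have := mul_nonneg (norm_nonneg (lam - 1)) hC0.le; linarith
  refine ⟨M, hM, fun z hz ↦ ?_⟩
  have hz0 : z ≠ 0 := norm_pos_iff.1 (by linarith)
  set w := z⁻¹
  have hMw : M * ‖w‖ < 1 := by
    rw [norm_inv, mul_inv_lt_iff₀ (by linarith)]
    linarith
  have hw : ‖w‖ < 1 := by nlinarith [norm_nonneg w]
  have hX := summable_norm_mul_pow_of_norm_le (by linarith) hgrowth hMw
  refine ⟨hX, ?_⟩
  have hrel := tsum_mul_pow_eq_of_recurrence hw hx0 hrec hX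
    (Complex.summable_norm_multichoose_mul_pow α hw)
  rw [(Complex.hasSum_multichoose_mul_pow α hw).tsum_eq] at hrel
  have h1w : 1 - w ≠ 0 := sub_ne_zero.2 fun h ↦ by simp [← h] at hw
  have hpow : (1 - w) ^ α ≠ 0 := Complex.cpow_ne_zero_iff.2 (.inl h1w)
  rw [Complex.cpow_sub _ _ h1w, Complex.cpow_one]
  field_simp at hrel ⊢
  linear_combination z * hrel + (∑' t, x t * w ^ t) * (1 - w) * (lam - 1) * mul_inv_cancel₀ hz0
end
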